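/- Assume the standing hypotheses. If $C_{\phi,w}^k$ is densely defined for some integer $k\ge 2$, then for every $\alpha\in(0,1]$ the weighted composition operator $C_{\phi,w_\alpha}$ (hence the closure of $\Delta_\alpha(C_{\phi,w})$) is densely defined. -/

import Mathlib

open MeasureTheory ENNReal NNReal Filter Topology

variable {X : Type*} [MeasurableSpace X]

/-- The measure `μ_w` with density `|w|²` with respect to `μ`. -/
noncomputable def wcMeasure (μ : Measure X) (w : X → ℂ) : Measure X :=
  μ.withDensity fun x => (‖w x‖₊ : ℝ≥0∞) ^ 2

/-- The Radon–Nikodym derivative `h_{φ,w} = d(μ_w ∘ φ⁻¹)/dμ`. -/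
noncomputable def wcDeriv (μ : Measure X) (w : X → ℂ) (φ : X → X) : X → ℝ≥0∞ :=
  ((wcMeasure μ w).map φ).rnDeriv μ

/-- The modified weight `w_α = w · (h_{φ,w}/(h_{φ,w}∘φ))^{α/2}` (interpreted a.e.). -/
noncomputable def wcAlpha (μ : Measure X) (w : X → ℂ) (φ : X → X) (α : ℝ) : X → ℂ :=
  fun x => w x * (((wcDeriv μ w φ x / wcDeriv μ w φ (φ x)) ^ (α / 2)).toReal : ℂ)

/-- `E` is (a version of) the conditional expectation of the nonnegative function `f`
with respect to the σ-algebra `φ⁻¹(𝒜)` and the measure `ν`. -/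
def IsCondExp (φ : X → X) (ν : Measure X) (f E : X → ℝ≥0∞) : Prop :=
  Measurable[MeasurableSpace.comap φ inferInstance] E ∧
    ∀ s : Set X, MeasurableSet s → ∫⁻ x in φ ⁻¹' s, E x ∂ν = ∫⁻ x in φ ⁻¹' s, f x ∂ν

/-- `g = E ∘ φ⁻¹`: the measurable function with `g ∘ φ = E` a.e. `[ν]`,
vanishing a.e. `[μ]` on the set where `h = 0`. -/
def IsQuot (φ : X → X) (μ ν : Measure X) (h : X → ℝ≥0∞) (E g : X → ℝ≥0∞) : Prop :=
  Measurable g ∧ (∀ᵐ x ∂ν, g (φ x) = E x) ∧ (∀ᵐ x ∂μ, h x = 0 → g x = 0)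

/-- `E` is (a version of) the conditional expectation of the complex function `f`
with respect to the σ-algebra `φ⁻¹(𝒜)` and the measure `ν`. -/
def IsCondExpC (φ : X → X) (ν : Measure X) (f E : X → ℂ) : Prop :=
  Measurable[MeasurableSpace.comap φ inferInstance] E ∧
    ∀ s : Set X, MeasurableSet s → ν (φ ⁻¹' s) < ⊤ →
      ∫ x in φ ⁻¹' s, E x ∂ν = ∫ x in φ ⁻¹' s, f x ∂ν

/-- `f_w = χ_{{w ≠ 0}} f / w`. -/
noncomputable def fw (w f : X → ℂ) : X → ℂ := fun x => if w x = 0 then 0 else f x / w x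

/-!
Write `h = h_{φ,w}` and `h₂ = h_{φ∘φ, w·(w∘φ)}`, so that `‖C_{φ,w} f‖² = ∫ h |f|²` and
`‖C_{φ,w}² f‖² = ∫ h₂ |f|²`. A weighted space `{f ∈ L² | ∫ H |f|² < ∞}` is dense iff `H < ∞`
a.e.; as the domain of `C_{φ,w}^k` lies in those of `C_{φ,w}` and `C_{φ,w}²`, this gives
`h, h₂ < ∞` a.e. For `α ≤ 1`, `|w_α|² ≤ |w|² (1 + h / h∘φ)` pointwise, and
`|w|² (h / h∘φ) (u∘φ) = h |w|² (u / h)∘φ` integrates to `∫ h₂ u / h`; hence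
`‖C_{φ,w_α} f‖² ≤ ∫ (h + h₂ / h) |f|²`, and the weighted space of the a.e. finite weight
`h + h₂ / h` is a dense subset of the domain of `C_{φ,w_α}`.
-/

variable {E : Type*} [NormedAddCommGroup E]

/-- The domain of multiplication by `√H` on `L²`. -/
def weightedL2Domain (μ : Measure X) (H : X → ℝ≥0∞) (E : Type*) [NormedAddCommGroup E] :
    Set (Lp E 2 μ) :=
  {f | ∫⁻ x, ‖f x‖ₑ ^ 2 * H x ∂μ < ⊤}

theorem tendsto_eLpNorm_indicator_of_antitone {μ : Measure X} {p : ℝ≥0∞} (hp0 : p ≠ 0)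
    (hp : p ≠ ⊤) {f : X → E} (hf : MemLp f p μ) {t : ℕ → Set X} (ht : ∀ n, MeasurableSet (t n))
    (h_anti : Antitone t) (h_null : μ (⋂ n, t n) = 0) :
    Tendsto (fun n => eLpNorm ((t n).indicator f) p μ) atTop (𝓝 0) := by
  set ν := μ.withDensity fun x => ‖f x‖ₑ ^ p.toReal
  have hν : ∀ n, eLpNorm ((t n).indicator f) p μ = ν (t n) ^ (1 / p.toReal) := fun n => by
    rw [eLpNorm_indicator_eq_eLpNorm_restrict (ht n), eLpNorm_eq_lintegral_rpow_enorm_toReal hp0 hp,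
      withDensity_apply _ (ht n)]
  have hν_fin : ν (t 0) ≠ ⊤ := by
    refine ne_top_of_le_ne_top ?_ (measure_mono (Set.subset_univ _))
    rw [withDensity_apply _ MeasurableSet.univ, Measure.restrict_univ]
    exact (lintegral_rpow_enorm_lt_top_of_eLpNorm_lt_top hp0 hp hf.eLpNorm_lt_top).ne
  have hlim : Tendsto (fun n => ν (t n)) atTop (𝓝 0) := by
    have := tendsto_measure_iInter_atTop (fun n => (ht n).nullMeasurableSet) h_anti ⟨0, hν_fin⟩
    rwa [withDensity_absolutelyContinuous μ _ h_null] at this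
  have hpow := (ENNReal.continuous_rpow_const (y := 1 / p.toReal)).tendsto 0 |>.comp hlim
  rw [ENNReal.zero_rpow_of_pos (by simp [ENNReal.toReal_pos hp0 hp])] at hpow
  exact hpow.congr fun n => (hν n).symm

theorem memLp_two_iff_lintegral_enorm_sq_lt_top {μ : Measure X} {f : X → E} :
    MemLp f 2 μ ↔ AEStronglyMeasurable f μ ∧ ∫⁻ x, ‖f x‖ₑ ^ 2 ∂μ < ⊤ := by
  refine and_congr_right fun _ => ?_
  simpa using eLpNorm_lt_top_iff_lintegral_rpow_enorm_lt_top (f := f) (μ := μ) two_ne_zero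
    ofNat_ne_top

theorem dense_weightedL2Domain {μ : Measure X} {H : X → ℝ≥0∞} (hH : Measurable H)
    (h_fin : ∀ᵐ x ∂μ, H x < ⊤) : Dense (weightedL2Domain μ H E) := by
  intro F
  set t : ℕ → Set X := fun n => {x | H x ≤ n}
  have ht : ∀ n, MeasurableSet (t n) := fun n => measurableSet_le hH measurable_const
  have hmem : ∀ n, MemLp ((t n).indicator F) 2 μ := fun n => (Lp.memLp F).indicator (ht n)
  have h_dom : ∀ n, (hmem n).toLp _ ∈ weightedL2Domain μ H E := fun n => by
    calc ∫⁻ x, ‖(hmem n).toLp _ x‖ₑ ^ 2 * H x ∂μ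
        = ∫⁻ x, ‖(t n).indicator F x‖ₑ ^ 2 * H x ∂μ :=
          lintegral_congr_ae <| by filter_upwards [(hmem n).coeFn_toLp] with x hx; rw [hx]
      _ ≤ ∫⁻ x, n * ‖F x‖ₑ ^ 2 ∂μ := lintegral_mono fun x => by
          by_cases hx : x ∈ t n
          · rw [Set.indicator_of_mem hx, mul_comm]; gcongr; exact hx
          · simp [Set.indicator_of_notMem hx]
      _ = n * ∫⁻ x, ‖F x‖ₑ ^ 2 ∂μ := lintegral_const_mul' _ _ (by simp)
      _ < ⊤ := mul_lt_top (by simp)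
          (memLp_two_iff_lintegral_enorm_sq_lt_top.1 (Lp.memLp F)).2
  have h_null : μ (⋂ n, (t n)ᶜ) = 0 := by
    refine measure_mono_null (fun x hx => ?_) (ae_iff.1 h_fin)
    intro hlt
    obtain ⟨n, hn⟩ := ENNReal.exists_nat_gt hlt.ne
    exact Set.mem_iInter.1 hx n hn.le
  have h_tendsto : Tendsto (fun n => (hmem n).toLp _) atTop (𝓝 F) := by
    rw [Lp.tendsto_Lp_iff_tendsto_eLpNorm']
    refine (tendsto_eLpNorm_indicator_of_antitone two_ne_zero ofNat_ne_top (Lp.memLp F)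
      (fun n => (ht n).compl) (fun m n hmn => Set.compl_subset_compl.2 fun x hx => ?_)
      h_null).congr fun n => ?_
    · exact (show H x ≤ m from hx).trans (Nat.cast_le.2 hmn)
    · rw [← eLpNorm_neg, Set.indicator_compl, neg_sub]
      exact eLpNorm_congr_ae ((hmem n).coeFn_toLp.sub EventuallyEq.rfl).symm
  exact mem_closure_of_tendsto h_tendsto (Eventually.of_forall h_dom)

theorem ae_lt_top_of_dense_weightedL2Domain [NormedSpace ℝ E] [Nontrivial E] {μ : Measure X}
    [SigmaFinite μ] {H : X → ℝ≥0∞} (hH : Measurable H) (hdense : Dense (weightedL2Domain μ H E)) :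
    ∀ᵐ x ∂μ, H x < ⊤ := by
  set A := {x | H x = ⊤}
  have hA : MeasurableSet A := hH (measurableSet_singleton ⊤)
  -- The domain lies in the kernel of the restriction to `A`, which is closed.
  have h_vanish : ∀ g : Lp E 2 μ, ∀ᵐ x ∂μ.restrict A, g x = 0 := by
    let R := LpToLpRestrictCLM X E ℝ μ 2 A
    have h_ker : weightedL2Domain μ H E ⊆ R ⁻¹' {0} := fun f hf => by
      have h_int : ∀ᵐ x ∂μ, ‖f x‖ₑ ^ 2 * H x < ⊤ :=
        ae_lt_top' ((Lp.aestronglyMeasurable f).enorm.pow_const 2 |>.mul hH.aemeasurable) hf.ne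
      refine (Lp.eq_zero_iff_ae_eq_zero).2 ?_
      filter_upwards [LpToLpRestrictCLM_coeFn ℝ A f, ae_restrict_of_ae h_int,
        ae_restrict_mem hA] with x hRx hx hxA
      rw [hRx, Pi.zero_apply]
      by_contra hne
      rw [show H x = ⊤ from hxA, ENNReal.mul_top (by simpa using hne)] at hx
      exact lt_irrefl _ hx
    intro g
    have hRg : R g = 0 := (isClosed_singleton.preimage R.continuous).closure_subset_iff.2 h_ker
      (hdense g)
    filter_upwards [LpToLpRestrictCLM_coeFn ℝ A g, (Lp.eq_zero_iff_ae_eq_zero).1 hRg]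
      with x hRx hRx_zero
    rw [← hRx, hRx_zero, Pi.zero_apply]
  rw [ae_iff]
  by_contra hA_pos
  obtain ⟨B, hB, hBA, hB_pos, hB_fin⟩ :=
    Measure.exists_subset_measure_lt_top hA (pos_iff_ne_zero.2 (by simpa using hA_pos))
  obtain ⟨c, hc⟩ := exists_ne (0 : E)
  have h_zero := h_vanish (indicatorConstLp 2 hB hB_fin.ne c)
  have : ∀ᵐ x ∂μ.restrict B, False := by
    filter_upwards [ae_restrict_of_ae_restrict_of_subset hBA h_zero,
      ae_restrict_of_ae (indicatorConstLp_coeFn (p := 2) (hs := hB) (hμs := hB_fin.ne) (c := c)),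
      ae_restrict_mem hB] with x hx_zero hx_ind hxB
    rw [Set.indicator_of_mem hxB] at hx_ind
    exact hc (hx_ind.symm.trans hx_zero)
  simp only [ae_iff, not_false_eq_true, Set.ofPred_true, Measure.restrict_apply_univ] at this
  exact hB_pos.ne' this

/-- At `b = 0` the left side vanishes: `a / 0` is `0` or `⊤`, and `⊤.toReal = 0`. -/
theorem ofReal_toReal_rpow_div_sq_le {α : ℝ} (hα0 : 0 < α) (hα1 : α ≤ 1) (a b : ℝ≥0∞) :
    ENNReal.ofReal ((a / b) ^ (α / 2)).toReal ^ 2 ≤ 1 + a * if b = 0 then 0 else b⁻¹ := by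
  have hα2 : 0 < α / 2 := by positivity
  rcases eq_or_ne b 0 with rfl | hb
  · rcases eq_or_ne a 0 with rfl | ha
    · simp [zero_rpow_of_pos hα2]
    · simp [div_zero ha, top_rpow_of_pos hα2]
  rw [if_neg hb, ← div_eq_mul_inv]
  rcases eq_or_ne (a / b) ⊤ with hc | hc
  · simp [hc, top_rpow_of_pos hα2]
  rw [ofReal_toReal (rpow_ne_top_of_nonneg hα2.le hc), ← ENNReal.rpow_natCast, ← ENNReal.rpow_mul]
  norm_num
  rcases le_total (a / b) 1 with h | h
  · exact (rpow_le_one h hα0.le).trans le_self_add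
  · calc (a / b) ^ α ≤ (a / b) ^ (1 : ℝ) := rpow_le_rpow_of_exponent_le h hα1
      _ ≤ 1 + a / b := by rw [ENNReal.rpow_one]; exact le_add_self

section WeightedComposition

variable {μ : Measure X} {w : X → ℂ} {φ : X → X}

theorem wcMeasure_eq_withDensity_enorm :
    wcMeasure μ w = μ.withDensity fun x => ‖w x‖ₑ ^ 2 := rfl

instance [SFinite μ] : SFinite (wcMeasure μ w) := by
  rw [wcMeasure_eq_withDensity_enorm]; infer_instance

theorem lintegral_map_wcMeasure (hw : Measurable w) (hφ : Measurable φ) {u : X → ℝ≥0∞}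
    (hu : AEMeasurable u ((wcMeasure μ w).map φ)) :
    ∫⁻ x, u x ∂(wcMeasure μ w).map φ = ∫⁻ x, ‖w x‖ₑ ^ 2 * u (φ x) ∂μ := by
  rw [lintegral_map' hu hφ.aemeasurable, wcMeasure_eq_withDensity_enorm,
    lintegral_withDensity_eq_lintegral_mul₀' (hw.enorm.pow_const 2).aemeasurable]
  · rfl
  · exact hu.comp_aemeasurable hφ.aemeasurable

theorem lintegral_enorm_sq_mul_comp [SigmaFinite μ] (hw : Measurable w) (hφ : Measurable φ)
    (habs : (wcMeasure μ w).map φ ≪ μ) {u : X → ℝ≥0∞} (hu : AEMeasurable u μ) :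
    ∫⁻ x, ‖w x‖ₑ ^ 2 * u (φ x) ∂μ = ∫⁻ x, wcDeriv μ w φ x * u x ∂μ := by
  rw [wcDeriv, lintegral_rnDeriv_mul habs hu,
    lintegral_map_wcMeasure hw hφ (hu.mono_ac habs)]

theorem ae_eq_zero_of_comp_mem_null (hw : Measurable w) (hφ : Measurable φ)
    (habs : (wcMeasure μ w).map φ ≪ μ) {N : Set X} (hN : μ N = 0) :
    ∀ᵐ x ∂μ, φ x ∈ N → w x = 0 := by
  have h_map : ∀ᵐ y ∂(wcMeasure μ w).map φ, y ∉ N := measure_eq_zero_iff_ae_notMem.1 (habs hN)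
  have h_dens := (ae_withDensity_iff (hw.enorm.pow_const 2)).1 (ae_of_ae_map hφ.aemeasurable h_map)
  filter_upwards [h_dens] with x hx hxN
  by_contra hw0
  exact hx (by simpa using hw0) hxN

theorem map_wcMeasure_comp_absolutelyContinuous (hw : Measurable w) (hφ : Measurable φ)
    (habs : (wcMeasure μ w).map φ ≪ μ) :
    (wcMeasure μ (fun x => w x * w (φ x))).map (φ ∘ φ) ≪ μ := by
  refine Measure.AbsolutelyContinuous.mk fun s hs hμs => ?_
  have h₁ := ae_eq_zero_of_comp_mem_null hw hφ habs hμs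
  have h₂ := ae_eq_zero_of_comp_mem_null hw hφ habs (ae_iff.1 h₁)
  rw [Measure.map_apply (hφ.comp hφ) hs, wcMeasure_eq_withDensity_enorm,
    withDensity_apply_eq_zero' (by fun_prop)]
  -- If `w x * w (φ x) ≠ 0` and `φ (φ x) ∈ s`, then `φ x` lies in the exceptional set of `h₁`.
  refine measure_mono_null (fun x ⟨hx, hxs⟩ => ?_) (ae_iff.1 h₂)
  simp_all

theorem lintegral_wcDeriv_mul_enorm_sq_mul_comp [SigmaFinite μ] (hw : Measurable w)
    (hφ : Measurable φ) (habs : (wcMeasure μ w).map φ ≪ μ) {v : X → ℝ≥0∞} (hv : Measurable v) :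
    ∫⁻ x, wcDeriv μ w φ x * (‖w x‖ₑ ^ 2 * v (φ x)) ∂μ =
      ∫⁻ x, wcDeriv μ (fun x => w x * w (φ x)) (φ ∘ φ) x * v x ∂μ := by
  rw [← lintegral_enorm_sq_mul_comp hw hφ habs (by fun_prop),
    ← lintegral_enorm_sq_mul_comp (w := fun x => w x * w (φ x)) (φ := φ ∘ φ) (by fun_prop)
      (by fun_prop) (map_wcMeasure_comp_absolutelyContinuous hw hφ habs) hv.aemeasurable]
  simp only [enorm_mul, mul_pow, mul_assoc, Function.comp_apply]

theorem mem_weightedL2Domain_wcDeriv [SigmaFinite μ] (hw : Measurable w) (hφ : Measurable φ)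
    (habs : (wcMeasure μ w).map φ ≪ μ) {f : Lp ℂ 2 μ}
    (hf : MemLp (fun x => w x * f (φ x)) 2 μ) :
    f ∈ weightedL2Domain μ (wcDeriv μ w φ) ℂ := by
  calc ∫⁻ x, ‖f x‖ₑ ^ 2 * wcDeriv μ w φ x ∂μ
      = ∫⁻ x, ‖w x‖ₑ ^ 2 * ‖f (φ x)‖ₑ ^ 2 ∂μ := by
        rw [lintegral_enorm_sq_mul_comp hw hφ habs ((Lp.aestronglyMeasurable f).enorm.pow_const 2)]
        simp only [mul_comm]
    _ = ∫⁻ x, ‖w x * f (φ x)‖ₑ ^ 2 ∂μ := by simp only [enorm_mul, mul_pow]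
    _ < ⊤ := (memLp_two_iff_lintegral_enorm_sq_lt_top.1 hf).2

theorem measurable_wcDeriv (μ : Measure X) (w : X → ℂ) (φ : X → X) :
    Measurable (wcDeriv μ w φ) :=
  Measure.measurable_rnDeriv _ _

theorem measurable_wcAlpha (hw : Measurable w) (hφ : Measurable φ) (α : ℝ) :
    Measurable (wcAlpha μ w φ α) := by
  have h := measurable_wcDeriv μ w φ
  unfold wcAlpha
  fun_prop

/-- The weight `h + h₂ / h` (read as `h` where `h = 0`), where `h = h_{φ,w}` and
`h₂ = h_{φ∘φ, w·(w∘φ)}` is the Radon–Nikodym derivative attached to `C_{φ,w}²`. -/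
noncomputable def wcAlphaBound (μ : Measure X) (w : X → ℂ) (φ : X → X) : X → ℝ≥0∞ :=
  fun x => wcDeriv μ w φ x + wcDeriv μ (fun y => w y * w (φ y)) (φ ∘ φ) x *
    if wcDeriv μ w φ x = 0 then 0 else (wcDeriv μ w φ x)⁻¹

theorem measurable_wcAlphaBound : Measurable (wcAlphaBound μ w φ) := by
  have h := measurable_wcDeriv μ w φ
  have h₂ := measurable_wcDeriv μ (fun y => w y * w (φ y)) (φ ∘ φ)
  unfold wcAlphaBound
  exact h.add (h₂.mul (Measurable.ite (h (measurableSet_singleton 0)) measurable_const h.inv))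

theorem lintegral_enorm_wcAlpha_sq_mul_comp_le [SigmaFinite μ] (hw : Measurable w)
    (hφ : Measurable φ) (habs : (wcMeasure μ w).map φ ≪ μ) {α : ℝ} (hα0 : 0 < α) (hα1 : α ≤ 1)
    {u : X → ℝ≥0∞} (hu : Measurable u) :
    ∫⁻ x, ‖wcAlpha μ w φ α x‖ₑ ^ 2 * u (φ x) ∂μ ≤ ∫⁻ x, wcAlphaBound μ w φ x * u x ∂μ := by
  set h := wcDeriv μ w φ
  set q : X → ℝ≥0∞ := fun x => if h x = 0 then 0 else (h x)⁻¹
  have hq : Measurable q :=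
    Measurable.ite (measurable_wcDeriv μ w φ (measurableSet_singleton 0)) measurable_const
      (measurable_wcDeriv μ w φ).inv
  calc ∫⁻ x, ‖wcAlpha μ w φ α x‖ₑ ^ 2 * u (φ x) ∂μ
      ≤ ∫⁻ x, ‖w x‖ₑ ^ 2 * (1 + h x * q (φ x)) * u (φ x) ∂μ := lintegral_mono fun x => by
        have hρ := ofReal_toReal_rpow_div_sq_le hα0 hα1 (h x) (h (φ x))
        have h_real (r : ℝ) (hr : 0 ≤ r) : ‖(r : ℂ)‖ₑ = ENNReal.ofReal r := by
          rw [← ofReal_norm, Complex.norm_real, Real.norm_of_nonneg hr]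
        rw [wcAlpha, enorm_mul, mul_pow, h_real _ toReal_nonneg]
        gcongr
    _ = ∫⁻ x, ‖w x‖ₑ ^ 2 * u (φ x) ∂μ + ∫⁻ x, h x * (‖w x‖ₑ ^ 2 * (q * u) (φ x)) ∂μ := by
        rw [← lintegral_add_left (by fun_prop)]
        congr 1 with x
        simp only [Pi.mul_apply]
        ring
    _ = ∫⁻ x, wcAlphaBound μ w φ x * u x ∂μ := by
        rw [lintegral_enorm_sq_mul_comp hw hφ habs hu.aemeasurable,
          lintegral_wcDeriv_mul_enorm_sq_mul_comp hw hφ habs (hq.mul hu),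
          ← lintegral_add_left (f := fun x => h x * u x) ((measurable_wcDeriv μ w φ).mul hu)]
        congr 1 with x
        simp only [wcAlphaBound, Pi.mul_apply, h, q]
        ring

theorem memLp_wcAlpha_mul_comp [SigmaFinite μ] (hw : Measurable w) (hφ : Measurable φ)
    (habs : (wcMeasure μ w).map φ ≪ μ) {α : ℝ} (hα0 : 0 < α) (hα1 : α ≤ 1) {f : Lp ℂ 2 μ}
    (hf : f ∈ weightedL2Domain μ (wcAlphaBound μ w φ) ℂ) :
    MemLp (fun x => wcAlpha μ w φ α x * f (φ x)) 2 μ := by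
  have hf_meas := Lp.aestronglyMeasurable f
  set f' := hf_meas.mk f
  have h_comp : (fun x => wcAlpha μ w φ α x * f (φ x)) =ᵐ[μ]
      fun x => wcAlpha μ w φ α x * f' (φ x) := by
    filter_upwards [ae_eq_zero_of_comp_mem_null hw hφ habs (ae_iff.1 hf_meas.ae_eq_mk)]
      with x hx
    by_cases h_eq : f (φ x) = f' (φ x)
    · rw [h_eq]
    · simp [wcAlpha, hx h_eq]
  rw [memLp_congr_ae h_comp, memLp_two_iff_lintegral_enorm_sq_lt_top]
  have hf' : Measurable f' := hf_meas.stronglyMeasurable_mk.measurable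
  refine ⟨((measurable_wcAlpha hw hφ α).mul (hf'.comp hφ)).aestronglyMeasurable, ?_⟩
  calc ∫⁻ x, ‖wcAlpha μ w φ α x * f' (φ x)‖ₑ ^ 2 ∂μ
      = ∫⁻ x, ‖wcAlpha μ w φ α x‖ₑ ^ 2 * ‖f' (φ x)‖ₑ ^ 2 ∂μ := by
        simp only [enorm_mul, mul_pow]
    _ ≤ ∫⁻ x, wcAlphaBound μ w φ x * ‖f' x‖ₑ ^ 2 ∂μ :=
        lintegral_enorm_wcAlpha_sq_mul_comp_le hw hφ habs hα0 hα1 (by fun_prop)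
    _ = ∫⁻ x, ‖f x‖ₑ ^ 2 * wcAlphaBound μ w φ x ∂μ := by
        refine lintegral_congr_ae ?_
        filter_upwards [hf_meas.ae_eq_mk] with x hx
        rw [hx, mul_comm]
    _ < ⊤ := hf

end WeightedComposition

/-- If the power `C_{φ,w}^k` (`k ≥ 2`) is densely defined, then
`C_{φ,w_α}` (the closure of `Δ_α(C_{φ,w})`) is densely defined, for every `α ∈ (0,1]`. -/
theorem aluthge_wco_power_denselyDefined
    (μ : Measure X) [SigmaFinite μ] (w : X → ℂ) (φ : X → X)
    (hw : Measurable w) (hφ : Measurable φ)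
    (habs : (wcMeasure μ w).map φ ≪ μ)
    (k : ℕ) (hk : 2 ≤ k)
    (hdense : Dense {f : Lp ℂ 2 μ |
      ∀ j ≤ k, MemLp ((fun g : X → ℂ => fun x => w x * g (φ x))^[j] (f : X → ℂ)) 2 μ})
    (α : ℝ) (hα : α ∈ Set.Ioc (0 : ℝ) 1) :
    Dense {f : Lp ℂ 2 μ |
      MemLp (fun x => wcAlpha μ w φ α x * (f : X → ℂ) (φ x)) 2 μ} := by
  obtain ⟨hα0, hα1⟩ := hα
  have h_fin : ∀ᵐ x ∂μ, wcDeriv μ w φ x < ⊤ := by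
    refine ae_lt_top_of_dense_weightedL2Domain (measurable_wcDeriv μ w φ)
      (hdense.mono fun f hf => ?_)
    exact mem_weightedL2Domain_wcDeriv hw hφ habs (hf 1 (by omega))
  have h₂_fin : ∀ᵐ x ∂μ, wcDeriv μ (fun x => w x * w (φ x)) (φ ∘ φ) x < ⊤ := by
    refine ae_lt_top_of_dense_weightedL2Domain (measurable_wcDeriv _ _ _)
      (hdense.mono fun f hf => ?_)
    refine mem_weightedL2Domain_wcDeriv (by fun_prop) (by fun_prop)
      (map_wcMeasure_comp_absolutelyContinuous hw hφ habs) ?_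
    simpa only [mul_assoc, Function.iterate_succ, Function.iterate_zero, Function.comp_apply,
      id] using hf 2 hk
  have h_bound_fin : ∀ᵐ x ∂μ, wcAlphaBound μ w φ x < ⊤ := by
    filter_upwards [h_fin, h₂_fin] with x h₁ h₂
    refine add_lt_top.2 ⟨h₁, mul_lt_top h₂ ?_⟩
    split_ifs with h₀
    · exact zero_lt_top
    · exact inv_lt_top.2 (pos_iff_ne_zero.2 h₀)
  exact (dense_weightedL2Domain measurable_wcAlphaBound h_bound_fin).mono fun f hf =>
    memLp_wcAlpha_mul_comp hw hφ habs hα0 hα1 hf
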